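/- For a symmetric difference configuration g of ℓ-tuples in F_2^n, the number of ℓ-tuples (z_1,...,z_ℓ) ∈ (F_2^n)^ℓ whose symmetric difference configuration equals g is the multinomial coefficient n! / ∏_{J⊆[ℓ]} V_{n,ℓ}(g)(J)!, where V_{n,ℓ}(g) is the corresponding Venn diagram configuration. -/

import Mathlib

open Finset

set_option linter.unusedSectionVars false

variable {α β ι : Type*} [Fintype α] [DecidableEq α] [Fintype β] [DecidableEq β]
  [Fintype ι] [DecidableEq ι]

def fcAux (p : α → β) (b : β) : ℕ := (univ.filter (fun a => p a = b)).card



lemma fcAux_comp_perm (p : α → β) (σ : Equiv.Perm α) : fcAux (p ∘ σ) = fcAux p := by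
  funext b
  exact Finset.card_bij' (fun a _ => σ a) (fun a _ => σ.symm a)
    (by simp [fcAux]) (by simp [fcAux]) (by simp) (by simp)

lemma exists_perm_of_fcAux_eq {p q : α → β} (h : fcAux q = fcAux p) :
    ∃ σ : Equiv.Perm α, p ∘ σ = q := by
  have e : ∀ b, {a // q a = b} ≃ {a // p a = b} := fun b =>
    Fintype.equivOfCardEq (by simpa [Fintype.card_subtype, fcAux] using congrFun h b)
  refine ⟨(Equiv.sigmaFiberEquiv q).symm.trans
    ((Equiv.sigmaCongrRight e).trans (Equiv.sigmaFiberEquiv p)), funext fun a => ?_⟩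
  exact (e (q a) ⟨a, rfl⟩).2

/-- stabilizer equiv -/
def stabEquiv (p : α → β) :
    {σ : Equiv.Perm α // p ∘ σ = p} ≃ (∀ b, Equiv.Perm {a // p a = b}) where
  toFun σ b := σ.1.subtypePerm (fun a => by rw [show p (σ.1 a) = p a from congrFun σ.2 a])
  invFun f := ⟨(Equiv.sigmaFiberEquiv p).symm.trans
      ((Equiv.sigmaCongrRight f).trans (Equiv.sigmaFiberEquiv p)),
    funext fun a => (f (p a) ⟨a, rfl⟩).2⟩
  left_inv σ := by
    ext a
    rfl
  right_inv f := by
    funext b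
    ext x
    obtain ⟨a, ha⟩ := x
    subst ha
    rfl

lemma card_stab (p : α → β) :
    (univ.filter (fun σ : Equiv.Perm α => p ∘ σ = p)).card = ∏ b, (fcAux p b).factorial := by
  classical
  rw [← Fintype.card_subtype]
  rw [Fintype.card_congr (stabEquiv p)]
  rw [Fintype.card_pi]
  refine Finset.prod_congr rfl fun b _ => ?_
  rw [Fintype.card_perm, Fintype.card_subtype]
  rfl

lemma card_fcAux_fiber_mul (p : α → β) :
    (univ.filter (fun q : α → β => fcAux q = fcAux p)).card * ∏ b, (fcAux p b).factorial =
      (Fintype.card α).factorial := by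
  classical
  have himg : (univ : Finset (Equiv.Perm α)).image (fun σ : Equiv.Perm α => p ∘ ⇑σ) =
      univ.filter (fun q : α → β => fcAux q = fcAux p) := by
    ext q
    simp only [mem_image, mem_univ, true_and, mem_filter]
    constructor
    · rintro ⟨σ, rfl⟩; exact fcAux_comp_perm p σ
    · intro h; obtain ⟨σ, hσ⟩ := exists_perm_of_fcAux_eq h; exact ⟨σ, hσ⟩
  have hfib : ∀ q ∈ (univ : Finset (Equiv.Perm α)).image (fun σ : Equiv.Perm α => p ∘ ⇑σ),
      (univ.filter (fun σ : Equiv.Perm α => p ∘ ⇑σ = q)).card =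
        ∏ b, (fcAux p b).factorial := by
    intro q hq
    simp only [mem_image, mem_univ, true_and] at hq
    obtain ⟨τ, hτ⟩ := hq
    rw [← card_stab p]
    refine Finset.card_bij' (fun σ _ => σ * τ⁻¹) (fun ρ _ => ρ * τ) ?_ ?_ ?_ ?_
    · intro σ hσ
      simp only [mem_filter, mem_univ, true_and] at hσ ⊢
      funext a
      have := congrFun hσ (τ⁻¹ a)
      have h2 := congrFun hτ (τ⁻¹ a)
      simp only [Function.comp_apply, Equiv.Perm.coe_mul] at this h2 ⊢
      rw [this, ← h2]
      simp
    · intro ρ hρ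
      simp only [mem_filter, mem_univ, true_and] at hρ ⊢
      funext a
      have := congrFun hρ (τ a)
      have h2 := congrFun hτ a
      simp only [Function.comp_apply, Equiv.Perm.coe_mul] at this h2 ⊢
      rw [this, h2]
    · intro σ _; group
    · intro ρ _; group
  have := Finset.card_eq_sum_card_image (fun σ : Equiv.Perm α => p ∘ ⇑σ) univ
  rw [Finset.sum_congr rfl hfib, Finset.sum_const, smul_eq_mul] at this
  rw [← himg]
  rw [← Fintype.card_perm, ← Finset.card_univ, this]


variable {α β ι : Type*} [Fintype α] [DecidableEq α] [Fintype β] [DecidableEq β]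
  [Fintype ι] [DecidableEq ι]


lemma card_filter_comp (p : α → β) (Q : β → Prop) [DecidablePred Q] :
    (univ.filter (fun a => Q (p a))).card = ∑ b, if Q b then fcAux p b else 0 := by
  rw [Finset.card_eq_sum_card_fiberwise (f := p) (t := univ) (fun x _ => mem_univ _)]
  refine Finset.sum_congr rfl fun b _ => ?_
  by_cases hb : Q b
  · simp only [hb, if_true, fcAux]
    congr 1
    ext a
    simp only [mem_filter, mem_univ, true_and, and_iff_right_iff_imp]
    rintro rfl; exact hb
  · simp only [hb, if_false, Finset.card_eq_zero]
    ext a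
    simp only [mem_filter, mem_univ, true_and, notMem_empty, iff_false, not_and]
    rintro h rfl; exact hb h

lemma sum_fcAux (p : α → β) : ∑ b, fcAux p b = Fintype.card α := by
  rw [← Finset.card_univ, Finset.card_eq_sum_card_fiberwise (f := p) (t := univ)
    (fun x _ => mem_univ _)]
  rfl

def chiAux (S J : Finset ι) : ℤ := ∏ j ∈ J, (if j ∈ S then -1 else 1)

lemma chiAux_eq_pow (S J : Finset ι) : chiAux S J = (-1) ^ ((S ∩ J).card) := by
  rw [chiAux, Finset.prod_ite _ _]
  simp only [Finset.prod_const, one_pow, mul_one, Finset.filter_mem_eq_inter]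
  rw [Finset.inter_comm]

lemma chiAux_eq_ind (S J : Finset ι) :
    chiAux S J = 1 - 2 * (if Odd ((S ∩ J).card) then 1 else 0) := by
  rw [chiAux_eq_pow]
  rcases Nat.even_or_odd ((S ∩ J).card) with h | h
  · rw [h.neg_one_pow, if_neg (Nat.not_odd_iff_even.2 h)]; ring
  · rw [h.neg_one_pow, if_pos h]; ring

lemma chiAux_mul (K T J : Finset ι) : chiAux K J * chiAux T J = chiAux (symmDiff K T) J := by
  rw [chiAux, chiAux, chiAux, ← Finset.prod_mul_distrib]
  refine Finset.prod_congr rfl fun j _ => ?_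
  by_cases hK : j ∈ K <;> by_cases hT : j ∈ T <;>
    simp [Finset.mem_symmDiff, hK, hT]

lemma sum_chiAux (S : Finset ι) :
    ∑ J : Finset ι, chiAux S J = if S = ∅ then 2 ^ (Fintype.card ι) else 0 := by
  have key : ∑ J : Finset ι, chiAux S J = ∏ j : ι, ((if j ∈ S then (-1 : ℤ) else 1) + 1) := by
    rw [Finset.prod_add]
    rw [← Finset.powerset_univ]
    exact Finset.sum_congr rfl fun t _ => by simp [chiAux]
  rw [key]
  by_cases hS : S = ∅
  · subst hS
    simp [Finset.prod_const, Finset.card_univ]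
  · rw [if_neg hS]
    obtain ⟨j, hj⟩ := Finset.nonempty_iff_ne_empty.2 hS
    exact Finset.prod_eq_zero (mem_univ j) (by simp [hj])

/-- Symmetric difference configuration. -/
def sdConfig (n ℓ : ℕ) (z : Fin ℓ → (Fin n → ZMod 2)) : Finset (Fin ℓ) → ℕ :=
  fun J => hammingNorm (∑ j ∈ J, z j)

/-- Venn diagram configuration (which is `V_{n,ℓ}` applied to the symmetric difference
configuration). -/
def vennConfig (n ℓ : ℕ) (z : Fin ℓ → (Fin n → ZMod 2)) : Finset (Fin ℓ) → ℕ :=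
  fun J => (univ.filter (fun i : Fin n => univ.filter (fun j : Fin ℓ => z j i = 1) = J)).card

/-- The number of `ℓ`-tuples in `(𝔽₂ⁿ)^ℓ` whose symmetric difference configuration equals a
given configuration `g` is the multinomial coefficient `n! / ∏_{J ⊆ [ℓ]} V_{n,ℓ}(g)(J)!`,
where `V_{n,ℓ}(g)` is the corresponding Venn diagram configuration. -/

def patAux (n ℓ : ℕ) (w : Fin ℓ → (Fin n → ZMod 2)) : Fin n → Finset (Fin ℓ) :=
  fun i => univ.filter (fun j => w j i = 1)

lemma venn_eq_fc (n ℓ : ℕ) (w : Fin ℓ → (Fin n → ZMod 2)) :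
    vennConfig n ℓ w = fcAux (patAux n ℓ w) := rfl

lemma zmod2_cases (x : ZMod 2) : x = 0 ∨ x = 1 := by revert x; decide

lemma sd_eq (n ℓ : ℕ) (w : Fin ℓ → (Fin n → ZMod 2)) (J : Finset (Fin ℓ)) :
    sdConfig n ℓ w J =
      ∑ T : Finset (Fin ℓ), if Odd ((T ∩ J).card) then vennConfig n ℓ w T else 0 := by
  have hpt : ∀ i, ((∑ j ∈ J, w j) i ≠ 0) ↔ Odd ((patAux n ℓ w i ∩ J).card) := by
    intro i
    have h1 : (∑ j ∈ J, w j) i = (((J.filter (fun j => w j i = 1)).card : ℕ) : ZMod 2) := by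
      rw [Finset.sum_apply, Finset.card_filter, Nat.cast_sum]
      refine Finset.sum_congr rfl fun j _ => ?_
      rcases zmod2_cases (w j i) with h | h <;> simp [h]
    have h2 : J.filter (fun j => w j i = 1) = patAux n ℓ w i ∩ J := by
      ext j
      simp [patAux, Finset.mem_inter, and_comm]
    rw [h1, h2, Ne, ZMod.natCast_eq_zero_iff, Nat.two_dvd_ne_zero, ← Nat.odd_iff]
  calc sdConfig n ℓ w J = (univ.filter (fun i => (∑ j ∈ J, w j) i ≠ 0)).card := rfl
    _ = (univ.filter (fun i => Odd ((patAux n ℓ w i ∩ J).card))).card := by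
        exact congrArg _ (Finset.filter_congr fun i _ => by rw [hpt i])
    _ = ∑ T : Finset (Fin ℓ), if Odd ((T ∩ J).card) then fcAux (patAux n ℓ w) T else 0 :=
        card_filter_comp (patAux n ℓ w) (fun T => Odd ((T ∩ J).card))
    _ = _ := by rw [venn_eq_fc]

lemma venn_inv (n ℓ : ℕ) (w : Fin ℓ → (Fin n → ZMod 2)) (K : Finset (Fin ℓ)) :
    (vennConfig n ℓ w K : ℤ) * 2 ^ ℓ =
      ∑ J : Finset (Fin ℓ), chiAux K J * ((n : ℤ) - 2 * (sdConfig n ℓ w J : ℤ)) := by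
  have hsum : ∑ T : Finset (Fin ℓ), (vennConfig n ℓ w T : ℤ) = n := by
    rw [← Nat.cast_sum]
    norm_cast
    rw [venn_eq_fc]
    rw [sum_fcAux, Fintype.card_fin]
  have h1 : ∀ J, ((n : ℤ) - 2 * (sdConfig n ℓ w J : ℤ)) =
      ∑ T : Finset (Fin ℓ), (vennConfig n ℓ w T : ℤ) * chiAux T J := by
    intro J
    have hsd : (sdConfig n ℓ w J : ℤ) = ∑ T : Finset (Fin ℓ),
        (vennConfig n ℓ w T : ℤ) * (if Odd ((T ∩ J).card) then 1 else 0) := by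
      rw [sd_eq]
      push_cast
      exact Finset.sum_congr rfl fun T _ => by split <;> simp
    have expand : ∀ T : Finset (Fin ℓ), (vennConfig n ℓ w T : ℤ) * chiAux T J =
        (vennConfig n ℓ w T : ℤ) -
          2 * ((vennConfig n ℓ w T : ℤ) * (if Odd ((T ∩ J).card) then 1 else 0)) := by
      intro T
      rw [chiAux_eq_ind]
      ring
    rw [Finset.sum_congr rfl (fun T _ => expand T), Finset.sum_sub_distrib, ← Finset.mul_sum,
      hsum, ← hsd]
  rw [Finset.sum_congr rfl (fun J _ => by rw [h1 J, Finset.mul_sum]), Finset.sum_comm]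
  have h2 : ∀ T : Finset (Fin ℓ),
      (∑ J : Finset (Fin ℓ), chiAux K J * ((vennConfig n ℓ w T : ℤ) * chiAux T J)) =
        if T = K then (vennConfig n ℓ w T : ℤ) * 2 ^ ℓ else 0 := by
    intro T
    have : (∑ J : Finset (Fin ℓ), chiAux K J * ((vennConfig n ℓ w T : ℤ) * chiAux T J)) =
        (vennConfig n ℓ w T : ℤ) * ∑ J : Finset (Fin ℓ), chiAux (symmDiff K T) J := by
      rw [Finset.mul_sum]
      exact Finset.sum_congr rfl fun J _ => by rw [← chiAux_mul]; ring
    rw [this, sum_chiAux, Fintype.card_fin]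
    by_cases h : T = K
    · subst h
      simp [symmDiff_self]
    · rw [if_neg h, if_neg, mul_zero]
      intro hc
      exact h (((symmDiff_eq_bot).1 hc).symm)
  rw [Finset.sum_congr rfl (fun T _ => h2 T), Finset.sum_ite_eq' univ K, if_pos (mem_univ K)]

lemma sd_eq_iff (n ℓ : ℕ) (w z : Fin ℓ → (Fin n → ZMod 2)) :
    sdConfig n ℓ w = sdConfig n ℓ z ↔ vennConfig n ℓ w = vennConfig n ℓ z := by
  constructor
  · intro h
    funext K
    have h1 := venn_inv n ℓ w K
    rw [h, ← venn_inv n ℓ z K] at h1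
    have h2 : (2 : ℤ) ^ ℓ ≠ 0 := by positivity
    exact_mod_cast mul_right_cancel₀ h2 h1
  · intro h
    funext J
    rw [sd_eq, sd_eq, h]

lemma pat_unpat (n ℓ : ℕ) (q : Fin n → Finset (Fin ℓ)) :
    patAux n ℓ (fun j i => if j ∈ q i then 1 else 0) = q := by
  funext i
  ext j
  simp only [patAux, mem_filter, mem_univ, true_and]
  split <;> simp_all

lemma unpat_pat (n ℓ : ℕ) (w : Fin ℓ → (Fin n → ZMod 2)) :
    (fun j i => if j ∈ patAux n ℓ w i then (1 : ZMod 2) else 0) = w := by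
  funext j i
  simp only [patAux, mem_filter, mem_univ, true_and]
  rcases zmod2_cases (w j i) with h | h <;> simp [h]



theorem card_config_fiber (n ℓ : ℕ) (z : Fin ℓ → (Fin n → ZMod 2)) :
    (univ.filter
        (fun w : Fin ℓ → (Fin n → ZMod 2) => sdConfig n ℓ w = sdConfig n ℓ z)).card =
      n.factorial / ∏ J : Finset (Fin ℓ), (vennConfig n ℓ z J).factorial := by
  classical
  have hfilter : (univ.filter
      (fun w : Fin ℓ → (Fin n → ZMod 2) => sdConfig n ℓ w = sdConfig n ℓ z)) =
      univ.filter (fun w => fcAux (patAux n ℓ w) = fcAux (patAux n ℓ z)) := by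
    refine Finset.filter_congr fun w _ => ?_
    rw [sd_eq_iff, venn_eq_fc, venn_eq_fc]
  rw [hfilter]
  have hcard : (univ.filter
      (fun w : Fin ℓ → (Fin n → ZMod 2) => fcAux (patAux n ℓ w) = fcAux (patAux n ℓ z))).card =
      (univ.filter (fun q : Fin n → Finset (Fin ℓ) => fcAux q = fcAux (patAux n ℓ z))).card := by
    refine Finset.card_bij' (fun w _ => patAux n ℓ w)
      (fun q _ => fun j i => if j ∈ q i then 1 else 0) ?_ ?_ ?_ ?_
    · intro w hw
      simp only [mem_filter, mem_univ, true_and] at hw ⊢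
      exact hw
    · intro q hq
      simp only [mem_filter, mem_univ, true_and] at hq ⊢
      rw [pat_unpat]
      exact hq
    · intro w _
      exact unpat_pat n ℓ w
    · intro q _
      exact pat_unpat n ℓ q
  rw [hcard]
  have hmul := card_fcAux_fiber_mul (patAux n ℓ z)
  rw [Fintype.card_fin] at hmul
  have hpos : 0 < ∏ J : Finset (Fin ℓ), (vennConfig n ℓ z J).factorial :=
    Finset.prod_pos fun _ _ => Nat.factorial_pos _
  have hprod : (∏ J : Finset (Fin ℓ), (fcAux (patAux n ℓ z) J).factorial) =
      ∏ J : Finset (Fin ℓ), (vennConfig n ℓ z J).factorial := by rw [← venn_eq_fc]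
  rw [hprod] at hmul
  exact (Nat.div_eq_of_eq_mul_left hpos hmul.symm).symm
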